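/- Let Ω be a bounded Lipschitz domain in ℝ^N and 0 < s < 1. Let u ∈ C_0^{0,s}(Ω̄) be extended as zero outside Ω. Then for every x_0 ∈ Ω and every φ ∈ C^1(ℝ^N) with φ(x_0) = u(x_0) and φ(x) ≥ u(x) for all x ∈ ℝ^N, one has (L_∞^- φ)(x_0) := inf_{y ∈ ℝ^N, y ≠ x_0} (φ(y) - φ(x_0))/|y - x_0|^s ≥ -|u|_s. In other words, u is a viscosity subsolution of L_∞^- u + |u|_s = 0 in Ω. -/

import Mathlib

open MeasureTheory Metric Set Filter Topology
open scoped ENNReal NNReal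

noncomputable section

/-- Euclidean space ℝ^N. -/
abbrev Euc (N : ℕ) := EuclideanSpace ℝ (Fin N)

variable {N : ℕ}

/-- Distance to the boundary of `Ω`. -/
def distBdry (Ω : Set (Euc N)) (x : Euc N) : ℝ := Metric.infDist x (frontier Ω)

/-- The β-Hölder seminorm `|u|_β` of `u` over the closure of `Ω`. -/
def holderSemi (β : ℝ) (Ω : Set (Euc N)) (u : Euc N → ℝ) : ℝ :=
  sSup {q : ℝ | ∃ x ∈ closure Ω, ∃ y ∈ closure Ω, x ≠ y ∧ q = |u x - u y| / dist x y ^ β}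

/-- Membership in `C_0^{0,β}(closure Ω)`: β-Hölder continuous on the closure of `Ω`
and vanishing on the boundary `∂Ω`. -/
def MemC0Holder (β : ℝ) (Ω : Set (Euc N)) (u : Euc N → ℝ) : Prop :=
  (∃ C : ℝ, ∀ x ∈ closure Ω, ∀ y ∈ closure Ω, |u x - u y| ≤ C * dist x y ^ β) ∧
  (∀ x ∈ frontier Ω, u x = 0)

/-- The p-th power `[u]_{s,p}^p` of the Gagliardo seminorm. -/
def gagliardo (N : ℕ) (s p : ℝ) (u : Euc N → ℝ) : ℝ≥0∞ :=
  ∫⁻ x : Euc N, ∫⁻ y : Euc N,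
    ENNReal.ofReal (|u x - u y| ^ p / dist x y ^ ((N : ℝ) + s * p))

/-- Membership in the fractional Sobolev space `W_0^{s,p}(Ω)`. -/
def MemW0 (s p : ℝ) (Ω : Set (Euc N)) (u : Euc N → ℝ) : Prop :=
  MemLp u (ENNReal.ofReal p) volume ∧ (∀ᵐ x : Euc N, x ∉ Ω → u x = 0) ∧
  gagliardo N s p u < ⊤

/-- `∫_Ω (log|u|)⁺ ω dx` as an extended nonnegative real. -/
def logIntPos (Ω : Set (Euc N)) (ω u : Euc N → ℝ) : ℝ≥0∞ :=
  ∫⁻ x in Ω, ENNReal.ofReal (ω x) * ENNReal.ofReal (Real.log |u x|)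

/-- `∫_Ω (log|u|)⁻ ω dx` as an extended nonnegative real,
with the convention `log 0 = -∞`. -/
def logIntNeg (Ω : Set (Euc N)) (ω u : Euc N → ℝ) : ℝ≥0∞ :=
  ∫⁻ x in Ω, ENNReal.ofReal (ω x) *
    (if u x = 0 then ⊤ else ENNReal.ofReal (-Real.log |u x|))

/-- The extended-real integral `∫_Ω (log|u|) ω dx` (which may equal `-∞`). -/
def logInt (Ω : Set (Euc N)) (ω u : Euc N → ℝ) : EReal :=
  (logIntPos Ω ω u : EReal) - (logIntNeg Ω ω u : EReal)

/-- The exponential map `EReal → ℝ≥0∞`, with `exp (-∞) = 0` and `exp ∞ = ∞`. -/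
def expE (x : EReal) : ℝ≥0∞ :=
  if x = ⊥ then 0 else if x = ⊤ then ⊤ else ENNReal.ofReal (Real.exp x.toReal)

/-- `k(u) := exp (∫_Ω (log|u|) ω dx)`. -/
def kval (Ω : Set (Euc N)) (ω u : Euc N → ℝ) : ℝ≥0∞ := expE (logInt Ω ω u)

/-- `Λ_p := inf { [u]_{s,p}^p : u ∈ M_p }` where
`M_p = {u ∈ W_0^{s,p}(Ω) : ∫_Ω (log|u|) ω dx = 0}`. -/
def LambdaP (N : ℕ) (s p : ℝ) (Ω : Set (Euc N)) (ω : Euc N → ℝ) : ℝ≥0∞ :=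
  sInf {Λ : ℝ≥0∞ | ∃ u : Euc N → ℝ,
    MemW0 s p Ω u ∧ logInt Ω ω u = 0 ∧ Λ = gagliardo N s p u}

/-- Membership in `M_s := {u ∈ C_0^{0,s}(closure Ω) : k(u) = 1}`. -/
def MemMs (s : ℝ) (Ω : Set (Euc N)) (ω u : Euc N → ℝ) : Prop :=
  MemC0Holder s Ω u ∧ kval Ω ω u = 1

/-- `μ_s := inf {|u|_s : u ∈ M_s}`. -/
def muS (s : ℝ) (Ω : Set (Euc N)) (ω : Euc N → ℝ) : ℝ :=
  sInf {m : ℝ | ∃ u : Euc N → ℝ, MemMs s Ω ω u ∧ m = holderSemi s Ω u}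

/-- `K_ε := ess sup_{0 ≤ t ≤ ε} ∫_{δ^{-1}{t}} ω dH_{N-1}`. -/
def Keps (N : ℕ) (Ω : Set (Euc N)) (ω : Euc N → ℝ) (ε : ℝ) : ℝ≥0∞ :=
  essSup (fun t : ℝ =>
      ∫⁻ x in distBdry Ω ⁻¹' {t}, ENNReal.ofReal (ω x)
        ∂(MeasureTheory.Measure.hausdorffMeasure ((N : ℝ) - 1)))
    (volume.restrict (Icc (0 : ℝ) ε))

/-- `u` is a weak solution of `(-Δ_p)^s u = Λ u⁻¹ ω` in `Ω`. -/
def IsWeakSolution (N : ℕ) (s p : ℝ) (Ω : Set (Euc N)) (ω : Euc N → ℝ) (Λ : ℝ)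
    (u : Euc N → ℝ) : Prop :=
  ∀ φ : Euc N → ℝ, MemW0 s p Ω φ →
    (∫ x : Euc N, ∫ y : Euc N,
        |u x - u y| ^ (p - 2) * (u x - u y) * (φ x - φ y) / dist x y ^ ((N : ℝ) + s * p))
      = Λ * ∫ x in Ω, (u x)⁻¹ * φ x * ω x

/-- `(L_∞^+ u)(x) := sup_{y ≠ x} (u(y)-u(x))/|y-x|^s`. -/
def Lplus (s : ℝ) (u : Euc N → ℝ) (x : Euc N) : ℝ :=
  ⨆ y : {y : Euc N // y ≠ x}, (u y.1 - u x) / dist y.1 x ^ s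

/-- `(L_∞^- u)(x) := inf_{y ≠ x} (u(y)-u(x))/|y-x|^s`. -/
def Lminus (s : ℝ) (u : Euc N → ℝ) (x : Euc N) : ℝ :=
  ⨅ y : {y : Euc N // y ≠ x}, (u y.1 - u x) / dist y.1 x ^ s

/-- `u` is a viscosity supersolution of `L u = 0` in `Ω`. -/
def IsViscSupersol (Ω : Set (Euc N)) (L : (Euc N → ℝ) → Euc N → ℝ)
    (u : Euc N → ℝ) : Prop :=
  ∀ x₀ ∈ Ω, ∀ φ : Euc N → ℝ, ContDiff ℝ 1 φ → HasCompactSupport φ →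
    φ x₀ = u x₀ → (∀ x, φ x ≤ u x) → L φ x₀ ≤ 0

/-- `u` is a viscosity subsolution of `L u = 0` in `Ω`. -/
def IsViscSubsol (Ω : Set (Euc N)) (L : (Euc N → ℝ) → Euc N → ℝ)
    (u : Euc N → ℝ) : Prop :=
  ∀ x₀ ∈ Ω, ∀ φ : Euc N → ℝ, ContDiff ℝ 1 φ → HasCompactSupport φ →
    φ x₀ = u x₀ → (∀ x, u x ≤ φ x) → 0 ≤ L φ x₀

/-!
For `y ∈ Ω` the Hölder seminorm gives `u y - u x₀ ≥ -|u|_s |y - x₀|^s` directly. For `y ∉ Ω`,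
where `u y = 0`, take a point `z ∈ ∂Ω` nearest to `x₀`: then `|z - x₀| ≤ |y - x₀|` and `u z = 0`,
so `u y - u x₀ = u z - u x₀ ≥ -|u|_s |y - x₀|^s` as well. A test function touching `u` from above
at `x₀` only increases these differences, which bounds every quotient in the infimum defining
`L_∞^- φ (x₀)`.
-/

theorem exists_mem_frontier_dist_le_of_notMem {E : Type*} [NormedAddCommGroup E]
    [NormedSpace ℝ E] [FiniteDimensional ℝ E] {Ω : Set E} {x y : E} (hx : x ∈ Ω)
    (hy : y ∉ Ω) : ∃ z ∈ frontier Ω, dist x z ≤ dist x y := by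
  obtain ⟨z, hz, hxz⟩ :=
    exists_mem_frontier_infDist_compl_eq_dist hx ((ne_univ_iff_exists_notMem Ω).2 ⟨y, hy⟩)
  exact ⟨z, hz, hxz ▸ infDist_le_dist_of_mem hy⟩

section Holder

variable {Ω : Set (Euc N)} {s : ℝ} {u : Euc N → ℝ}

theorem holderSemi_nonneg : 0 ≤ holderSemi s Ω u := by
  refine Real.sSup_nonneg ?_
  rintro q ⟨x, -, y, -, hxy, rfl⟩
  have := dist_pos.2 hxy
  positivity

theorem abs_sub_le_holderSemi_mul {C : ℝ}
    (hC : ∀ x ∈ closure Ω, ∀ y ∈ closure Ω, |u x - u y| ≤ C * dist x y ^ s)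
    {x y : Euc N} (hx : x ∈ closure Ω) (hy : y ∈ closure Ω) :
    |u x - u y| ≤ holderSemi s Ω u * dist x y ^ s := by
  rcases eq_or_ne x y with rfl | hxy
  · simp only [sub_self, abs_zero]
    exact mul_nonneg holderSemi_nonneg (by positivity)
  have hd : 0 < dist x y ^ s := Real.rpow_pos_of_pos (dist_pos.2 hxy) s
  have hbdd : BddAbove {q : ℝ | ∃ x ∈ closure Ω, ∃ y ∈ closure Ω, x ≠ y ∧
      q = |u x - u y| / dist x y ^ s} := by
    refine ⟨C, ?_⟩
    rintro q ⟨x, hx, y, hy, hxy, rfl⟩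
    exact (div_le_iff₀ (Real.rpow_pos_of_pos (dist_pos.2 hxy) s)).2 (hC x hx y hy)
  exact (div_le_iff₀ hd).1 (le_csSup hbdd ⟨x, hx, y, hy, hxy, rfl⟩)

theorem neg_holderSemi_mul_le_sub (hs : 0 ≤ s) (hu : MemC0Holder s Ω u)
    (hu0 : ∀ x ∉ Ω, u x = 0) {x₀ : Euc N} (hx₀ : x₀ ∈ Ω) (y : Euc N) :
    -(holderSemi s Ω u * dist y x₀ ^ s) ≤ u y - u x₀ := by
  obtain ⟨⟨C, hC⟩, hfr⟩ := hu
  by_cases hy : y ∈ Ω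
  · have := abs_sub_le_holderSemi_mul hC (subset_closure hy) (subset_closure hx₀)
    linarith [neg_abs_le (u y - u x₀)]
  obtain ⟨z, hz, hzy⟩ := exists_mem_frontier_dist_le_of_notMem hx₀ hy
  have hx₀z := abs_sub_le_holderSemi_mul hC (subset_closure hx₀) (frontier_subset_closure hz)
  have hmono : holderSemi s Ω u * dist x₀ z ^ s ≤ holderSemi s Ω u * dist y x₀ ^ s := by
    rw [dist_comm y]
    gcongr
    exact holderSemi_nonneg
  rw [hfr z hz, sub_zero] at hx₀z
  linarith [hu0 y hy, le_abs_self (u x₀)]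

end Holder

theorem neg_le_Lminus {N : ℕ} {s H : ℝ} {φ : Euc N → ℝ} {x : Euc N} (hH : 0 ≤ H)
    (h : ∀ y, -(H * dist y x ^ s) ≤ φ y - φ x) : -H ≤ Lminus s φ x := by
  refine Real.le_iInf (fun y => ?_) (neg_nonpos.2 hH)
  rw [le_div_iff₀ (Real.rpow_pos_of_pos (dist_pos.2 y.2) s), neg_mul]
  exact h y

theorem viscosity_subsolution_Lminus_general
    (N : ℕ) (Ω : Set (Euc N))
    (s : ℝ) (hs0 : 0 < s)
    (u : Euc N → ℝ) (hu : MemC0Holder s Ω u) (hu0 : ∀ x ∉ Ω, u x = 0) :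
    ∀ x₀ ∈ Ω, ∀ φ : Euc N → ℝ, ContDiff ℝ 1 φ →
      φ x₀ = u x₀ → (∀ x, u x ≤ φ x) →
      -(holderSemi s Ω u) ≤ Lminus s φ x₀ := by
  intro x₀ hx₀ φ _ hφx₀ hle
  refine neg_le_Lminus holderSemi_nonneg fun y => ?_
  linarith [neg_holderSemi_mul_le_sub hs0.le hu hu0 hx₀ y, hle y]

/-- Any `u ∈ C_0^{0,s}(closure Ω)` extended by zero outside `Ω` is a
viscosity subsolution of `L_∞^- u + |u|_s = 0` in `Ω`: for every `x₀ ∈ Ω` and every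
`C¹` test function `φ` touching `u` from above at `x₀`, one has `(L_∞^- φ)(x₀) ≥ -|u|_s`. -/
theorem viscosity_subsolution_Lminus
    (N : ℕ) (Ω : Set (Euc N)) (hΩo : IsOpen Ω) (hΩb : Bornology.IsBounded Ω)
    (hΩc : IsConnected Ω)
    (s : ℝ) (hs0 : 0 < s) (hs1 : s < 1)
    (u : Euc N → ℝ) (hu : MemC0Holder s Ω u) (hu0 : ∀ x ∉ Ω, u x = 0) :
    ∀ x₀ ∈ Ω, ∀ φ : Euc N → ℝ, ContDiff ℝ 1 φ →
      φ x₀ = u x₀ → (∀ x, u x ≤ φ x) →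
      -(holderSemi s Ω u) ≤ Lminus s φ x₀ :=
  viscosity_subsolution_Lminus_general N Ω s hs0 u hu hu0
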